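/- The extended universal-disjunction scope rule is sound: for teams X of a model M with at least two elements, with x not free in ψ and y, z fresh variables, M ⊨_X ∀x φ(x,𝗏) ∨ ψ(𝗏) if and only if M ⊨_X ∃y∃z∀x((φ ∧ y=z) ∨ (ψ ∧ y≠z)). -/

import Mathlib

namespace TeamSem

variable {M : Type}

/-- A team is a set of assignments (variables are natural numbers). -/
abbrev Team (M : Type) := Set (ℕ → M)

/-- Lax existential extension of a team `X` along variable `x` by a choice function `F`. -/
def extT (X : Team M) (x : ℕ) (F : (ℕ → M) → Set M) : Team M :=
  {t | ∃ s ∈ X, ∃ a ∈ F s, t = Function.update s x a}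

/-- Universal extension of a team `X` along variable `x`. -/
def extAll (X : Team M) (x : ℕ) : Team M :=
  {t | ∃ s ∈ X, ∃ a : M, t = Function.update s x a}

/-- First-order formulas with semantic atoms depending on a finite list of variables. -/
inductive FOForm (M : Type) where
  | atom : List ℕ → (List M → Prop) → FOForm M
  | neg  : FOForm M → FOForm M
  | and  : FOForm M → FOForm M → FOForm M
  | or   : FOForm M → FOForm M → FOForm M
  | ex   : ℕ → FOForm M → FOForm M
  | all  : ℕ → FOForm M → FOForm M

/-- Tarskian (single-assignment) satisfaction for first-order formulas. -/
def FOForm.sat : FOForm M → (ℕ → M) → Prop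
  | .atom l p, s => p (l.map s)
  | .neg φ, s => ¬ FOForm.sat φ s
  | .and φ ψ, s => FOForm.sat φ s ∧ FOForm.sat ψ s
  | .or φ ψ, s => FOForm.sat φ s ∨ FOForm.sat ψ s
  | .ex x φ, s => ∃ a : M, FOForm.sat φ (Function.update s x a)
  | .all x φ, s => ∀ a : M, FOForm.sat φ (Function.update s x a)

/-- Free variables of a first-order formula. -/
def FOForm.fv : FOForm M → Set ℕ
  | .atom l _ => {v | v ∈ l}
  | .neg φ => FOForm.fv φ
  | .and φ ψ => FOForm.fv φ ∪ FOForm.fv ψ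
  | .or φ ψ => FOForm.fv φ ∪ FOForm.fv ψ
  | .ex x φ => FOForm.fv φ \ {x}
  | .all x φ => FOForm.fv φ \ {x}

/-- Formulas of inclusion logic: first-order formulas (with negation applied
only to first-order formulas), inclusion atoms, ∧, ∨, ∃, ∀. -/
inductive IncForm (M : Type) where
  | fo   : FOForm M → IncForm M
  | incl : List ℕ → List ℕ → IncForm M
  | and  : IncForm M → IncForm M → IncForm M
  | or   : IncForm M → IncForm M → IncForm M
  | ex   : ℕ → IncForm M → IncForm M
  | all  : ℕ → IncForm M → IncForm M

/-- Lax team semantics for inclusion logic. -/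
def IncForm.tsat : IncForm M → Team M → Prop
  | .fo α, X => ∀ s ∈ X, FOForm.sat α s
  | .incl xs ys, X => ∀ s ∈ X, ∃ s' ∈ X, xs.map s = ys.map s'
  | .and φ ψ, X => IncForm.tsat φ X ∧ IncForm.tsat ψ X
  | .or φ ψ, X => ∃ Y Z : Team M, X = Y ∪ Z ∧ IncForm.tsat φ Y ∧ IncForm.tsat ψ Z
  | .ex x φ, X => ∃ F : (ℕ → M) → Set M, (∀ s ∈ X, (F s).Nonempty) ∧
      IncForm.tsat φ (extT X x F)
  | .all x φ, X => IncForm.tsat φ (extAll X x)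

/-- Free variables of an inclusion logic formula. -/
def IncForm.fv : IncForm M → Set ℕ
  | .fo α => FOForm.fv α
  | .incl xs ys => {v | v ∈ xs ∨ v ∈ ys}
  | .and φ ψ => IncForm.fv φ ∪ IncForm.fv ψ
  | .or φ ψ => IncForm.fv φ ∪ IncForm.fv ψ
  | .ex x φ => IncForm.fv φ \ {x}
  | .all x φ => IncForm.fv φ \ {x}

/-- A block of existential quantifiers. -/
def IncForm.exs (l : List ℕ) (φ : IncForm M) : IncForm M := l.foldr IncForm.ex φ

/-- A block of universal quantifiers. -/
def IncForm.alls (l : List ℕ) (φ : IncForm M) : IncForm M := l.foldr IncForm.all φ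

/-- The first-order equality atom `x = y`. -/
def eqAtom (x y : ℕ) : FOForm M :=
  .atom [x, y] (fun l => match l with | [a, b] => a = b | _ => False)

/-- The first-order inequality atom `x ≠ y`. -/
def neqAtom (x y : ℕ) : FOForm M :=
  .atom [x, y] (fun l => match l with | [a, b] => a ≠ b | _ => False)

/-- First-order biconditional `α ↔ β`, i.e. `(¬α ∨ β) ∧ (¬β ∨ α)`. -/
def iffF (a b : FOForm M) : FOForm M := .and (.or (.neg a) b) (.or (.neg b) a)

/-- Conjunction of a list of inclusion logic formulas. -/
def bigAndI (l : List (IncForm M)) : IncForm M :=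
  l.foldr IncForm.and (.fo (.atom [] (fun _ => True)))

/-- Disjunction of a list of inclusion logic formulas (empty disjunction is `⊥`). -/
def bigOrI (l : List (IncForm M)) : IncForm M :=
  l.foldr IncForm.or (.fo (.atom [] (fun _ => False)))

/-!
Since `y` and `z` are fresh, by locality the right-hand side says that values of `y` and `z` can
be chosen at each assignment of `X` so that `∀x φ` holds on the assignments where they can be
chosen equal and `ψ` on those where they can differ; these two subteams cover `X`, which gives the
left-hand side. Conversely, for a split `X = Y ∪ Z`, let `z` be constantly `a` and let `y` be `a`
on `Y` and `b ≠ a` on `Z`: the two subteams are then exactly `Y` and `Z`.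
-/

open Function Set

lemma _root_.Set.EqOn.update {α β : Type*} [DecidableEq α] {V : Set α} {s t : α → β}
    (h : EqOn s t V) (w : α) (a : β) :
    EqOn (update s w a) (update t w a) (insert w V) := by
  intro v hv
  rcases eq_or_ne v w with rfl | hvw
  · simp
  · rw [update_of_ne hvw, update_of_ne hvw]
    exact h (hv.resolve_left hvw)

lemma _root_.Set.eqOn_update_compl {α β : Type*} [DecidableEq α] (s : α → β) (w : α) (a : β) :
    EqOn (update s w a) s {w}ᶜ :=
  fun _ hv => update_of_ne hv _ _

lemma FOForm.sat_congr (α : FOForm M) {s t : ℕ → M} (h : EqOn s t α.fv) :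
    α.sat s ↔ α.sat t := by
  induction α generalizing s t with
  | atom l p => simp only [FOForm.sat, List.map_congr_left fun v hv => h hv]
  | neg α ih => exact not_congr (ih h)
  | and α β ihα ihβ =>
    exact and_congr (ihα (h.mono subset_union_left)) (ihβ (h.mono subset_union_right))
  | or α β ihα ihβ =>
    exact or_congr (ihα (h.mono subset_union_left)) (ihβ (h.mono subset_union_right))
  | ex w α ih =>
    exact exists_congr fun a =>
      ih ((h.update w a).mono (sdiff_singleton_subset_iff.1 subset_rfl))
  | all w α ih =>
    exact forall_congr' fun a =>
      ih ((h.update w a).mono (sdiff_singleton_subset_iff.1 subset_rfl))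

/-- `X ↾ V = X' ↾ V`. -/
def RestrictEq (V : Set ℕ) (X X' : Team M) : Prop :=
  (∀ s ∈ X, ∃ t ∈ X', EqOn s t V) ∧ ∀ t ∈ X', ∃ s ∈ X, EqOn s t V

namespace RestrictEq

variable {V : Set ℕ} {X X' : Team M}

lemma symm (h : RestrictEq V X X') : RestrictEq V X' X :=
  ⟨fun t ht => (h.2 t ht).imp fun _ ⟨hs, hst⟩ => ⟨hs, hst.symm⟩,
    fun s hs => (h.1 s hs).imp fun _ ⟨ht, hst⟩ => ⟨ht, hst.symm⟩⟩

lemma extAll (h : RestrictEq V X X') (w : ℕ) :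
    RestrictEq (insert w V) (extAll X w) (extAll X' w) := by
  constructor
  · rintro _ ⟨s, hs, a, rfl⟩
    obtain ⟨t, ht, hst⟩ := h.1 s hs
    exact ⟨update t w a, ⟨t, ht, a, rfl⟩, hst.update w a⟩
  · rintro _ ⟨t, ht, a, rfl⟩
    obtain ⟨s, hs, hst⟩ := h.2 t ht
    exact ⟨update s w a, ⟨s, hs, a, rfl⟩, hst.update w a⟩

/-- The witness function for `X'` collects the values `F` chooses at the assignments of `X`
with the same restriction. -/
lemma exists_extT (h : RestrictEq V X X') (w : ℕ) (F : (ℕ → M) → Set M)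
    (hF : ∀ s ∈ X, (F s).Nonempty) :
    ∃ F' : (ℕ → M) → Set M, (∀ t ∈ X', (F' t).Nonempty) ∧
      RestrictEq (insert w V) (extT X w F) (extT X' w F') := by
  refine ⟨fun t => {a | ∃ s ∈ X, EqOn s t V ∧ a ∈ F s}, fun t ht => ?_, ?_, ?_⟩
  · obtain ⟨s, hs, hst⟩ := h.2 t ht
    obtain ⟨a, ha⟩ := hF s hs
    exact ⟨a, s, hs, hst, ha⟩
  · rintro _ ⟨s, hs, a, ha, rfl⟩
    obtain ⟨t, ht, hst⟩ := h.1 s hs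
    exact ⟨update t w a, ⟨t, ht, a, ⟨s, hs, hst, ha⟩, rfl⟩, hst.update w a⟩
  · rintro _ ⟨t, ht, a, ⟨s, hs, hst, ha⟩, rfl⟩
    exact ⟨update s w a, ⟨s, hs, a, ha, rfl⟩, hst.update w a⟩

lemma exists_union {Y Z : Team M} (h : RestrictEq V (Y ∪ Z) X') :
    ∃ Y' Z' : Team M, X' = Y' ∪ Z' ∧ RestrictEq V Y Y' ∧ RestrictEq V Z Z' := by
  let restrictOf (S : Team M) : Team M := {t ∈ X' | ∃ s ∈ S, EqOn s t V}
  have restrictEq_restrictOf {S : Team M} (hS : S ⊆ Y ∪ Z) : RestrictEq V S (restrictOf S) :=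
    ⟨fun s hs => (h.1 s (hS hs)).imp fun t ⟨ht, hst⟩ => ⟨⟨ht, s, hs, hst⟩, hst⟩,
      fun _ ⟨_, hs⟩ => hs⟩
  refine ⟨restrictOf Y, restrictOf Z, ?_, restrictEq_restrictOf subset_union_left,
    restrictEq_restrictOf subset_union_right⟩
  ext t
  refine ⟨fun ht => ?_, fun ht => ht.elim And.left And.left⟩
  obtain ⟨s, hs | hs, hst⟩ := h.2 t ht
  exacts [Or.inl ⟨ht, s, hs, hst⟩, Or.inr ⟨ht, s, hs, hst⟩]

end RestrictEq

theorem IncForm.tsat_of_restrictEq (φ : IncForm M) {V : Set ℕ} (hV : φ.fv ⊆ V)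
    {X X' : Team M} (h : RestrictEq V X X') (hX : φ.tsat X) : φ.tsat X' := by
  induction φ generalizing V X X' with
  | fo α =>
    intro t ht
    obtain ⟨s, hs, hst⟩ := h.2 t ht
    exact (FOForm.sat_congr α (hst.mono hV)).1 (hX s hs)
  | incl xs ys =>
    intro t ht
    obtain ⟨s, hs, hst⟩ := h.2 t ht
    obtain ⟨s', hs', hss'⟩ := hX s hs
    obtain ⟨t', ht', hs't'⟩ := h.1 s' hs'
    refine ⟨t', ht', ?_⟩
    rw [← List.map_congr_left fun v hv => hst (hV (Or.inl hv)), hss',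
      List.map_congr_left fun v hv => hs't' (hV (Or.inr hv))]
  | and φ ψ ihφ ihψ =>
    exact ⟨ihφ (subset_union_left.trans hV) h hX.1, ihψ (subset_union_right.trans hV) h hX.2⟩
  | or φ ψ ihφ ihψ =>
    obtain ⟨Y, Z, rfl, hY, hZ⟩ := hX
    obtain ⟨Y', Z', rfl, hYY', hZZ'⟩ := h.exists_union
    exact ⟨Y', Z', rfl, ihφ (subset_union_left.trans hV) hYY' hY,
      ihψ (subset_union_right.trans hV) hZZ' hZ⟩
  | ex w φ ih =>
    obtain ⟨F, hF, hφ⟩ := hX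
    obtain ⟨F', hF', hext⟩ := h.exists_extT w F hF
    exact ⟨F', hF', ih (sdiff_singleton_subset_iff.1 hV) hext hφ⟩
  | all w φ ih => exact ih (sdiff_singleton_subset_iff.1 hV) (h.extAll w) hX

theorem IncForm.tsat_congr_restrictEq (φ : IncForm M) {V : Set ℕ} (hV : φ.fv ⊆ V)
    {X X' : Team M} (h : RestrictEq V X X') : φ.tsat X ↔ φ.tsat X' :=
  ⟨φ.tsat_of_restrictEq hV h, φ.tsat_of_restrictEq hV h.symm⟩

lemma restrictEq_extAll_self (X : Team M) (x : ℕ) : RestrictEq {x}ᶜ (extAll X x) X :=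
  ⟨fun _ ⟨s, hs, a, hu⟩ => ⟨s, hs, hu ▸ eqOn_update_compl s x a⟩,
    fun s hs => ⟨s, ⟨s, hs, s x, (update_eq_self x s).symm⟩, eqOn_refl _ _⟩⟩

theorem IncForm.tsat_extAll_iff {φ : IncForm M} {x : ℕ} (hx : x ∉ φ.fv) (X : Team M) :
    φ.tsat (extAll X x) ↔ φ.tsat X :=
  φ.tsat_congr_restrictEq (subset_compl_singleton_iff.2 hx) (restrictEq_extAll_self X x)

lemma sep_extAll {X : Team M} {x : ℕ} {p : (ℕ → M) → Prop}
    (hp : ∀ s a, p (update s x a) ↔ p s) :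
    {u ∈ extAll X x | p u} = extAll {s ∈ X | p s} x := by
  ext u
  constructor
  · rintro ⟨⟨s, hs, a, rfl⟩, hpu⟩
    exact ⟨s, ⟨hs, (hp s a).1 hpu⟩, a, rfl⟩
  · rintro ⟨s, ⟨hs, hps⟩, a, rfl⟩
    exact ⟨⟨s, hs, a, rfl⟩, (hp s a).2 hps⟩

lemma restrictEq_sep_extT_extT {X : Team M} {y z : ℕ} (hyz : y ≠ z) (Fy Fz : (ℕ → M) → Set M)
    (p : M → M → Prop) :
    RestrictEq {y, z}ᶜ {t ∈ extT (extT X y Fy) z Fz | p (t y) (t z)}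
      {s ∈ X | ∃ b ∈ Fy s, ∃ c ∈ Fz (update s y b), p b c} := by
  have hagree (s : ℕ → M) (b c : M) : EqOn (update (update s y b) z c) s {y, z}ᶜ := fun v hv => by
    simp only [mem_compl_iff, mem_insert_iff, mem_singleton_iff, not_or] at hv
    simp only [update_of_ne hv.1, update_of_ne hv.2]
  have hy (s : ℕ → M) (b c : M) : update (update s y b) z c y = b := by simp [hyz]
  constructor
  · rintro _ ⟨⟨_, ⟨s, hs, b, hb, rfl⟩, c, hc, rfl⟩, hp⟩
    rw [hy, update_self] at hp
    exact ⟨s, ⟨hs, b, hb, c, hc, hp⟩, hagree s b c⟩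
  · rintro s ⟨hs, b, hb, c, hc, hp⟩
    refine ⟨update (update s y b) z c, ⟨⟨_, ⟨s, hs, b, hb, rfl⟩, c, hc, rfl⟩, ?_⟩, hagree s b c⟩
    rwa [hy, update_self]

lemma tsat_or_and_eqAtom_and_neqAtom (φ ψ : IncForm M) (y z : ℕ) (X : Team M) :
    IncForm.tsat (.or (.and φ (.fo (eqAtom y z))) (.and ψ (.fo (neqAtom y z)))) X ↔
      φ.tsat {s ∈ X | s y = s z} ∧ ψ.tsat {s ∈ X | s y ≠ s z} := by
  constructor
  · rintro ⟨Y, Z, rfl, ⟨hφ, hY⟩, ⟨hψ, hZ⟩⟩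
    have hYeq : {s ∈ Y ∪ Z | s y = s z} = Y := by
      ext s
      exact ⟨fun ⟨hs, hsyz⟩ => hs.resolve_right fun hsZ => hZ s hsZ hsyz,
        fun hs => ⟨Or.inl hs, hY s hs⟩⟩
    have hZeq : {s ∈ Y ∪ Z | s y ≠ s z} = Z := by
      ext s
      exact ⟨fun ⟨hs, hsyz⟩ => hs.resolve_left fun hsY => hsyz (hY s hsY),
        fun hs => ⟨Or.inr hs, hZ s hs⟩⟩
    rw [hYeq, hZeq]
    exact ⟨hφ, hψ⟩
  · rintro ⟨hφ, hψ⟩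
    have hX : X = {s ∈ X | s y = s z} ∪ {s ∈ X | s y ≠ s z} := by
      ext s
      by_cases h : s y = s z <;> simp [h]
    exact ⟨_, _, hX, ⟨hφ, fun s hs => hs.2⟩, ⟨hψ, fun s hs => hs.2⟩⟩

theorem tsat_ex_ex_all_or_iff {φ ψ : IncForm M} {x y z : ℕ} (X : Team M)
    (hxψ : x ∉ ψ.fv) (hyz : y ≠ z) (hyx : y ≠ x) (hzx : z ≠ x)
    (hyφ : y ∉ φ.fv) (hyψ : y ∉ ψ.fv) (hzφ : z ∉ φ.fv) (hzψ : z ∉ ψ.fv) :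
    IncForm.tsat (.ex y (.ex z (.all x
        (.or (.and φ (.fo (eqAtom y z))) (.and ψ (.fo (neqAtom y z))))))) X ↔
      ∃ Fy : (ℕ → M) → Set M, (∀ s ∈ X, (Fy s).Nonempty) ∧
        ∃ Fz : (ℕ → M) → Set M, (∀ t ∈ extT X y Fy, (Fz t).Nonempty) ∧
          IncForm.tsat (.all x φ) {s ∈ X | ∃ b ∈ Fy s, ∃ c ∈ Fz (update s y b), b = c} ∧
          ψ.tsat {s ∈ X | ∃ b ∈ Fy s, ∃ c ∈ Fz (update s y b), b ≠ c} := by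
  refine exists_congr fun Fy => and_congr_right fun _ => exists_congr fun Fz =>
    and_congr_right fun _ => ?_
  have hupd (s : ℕ → M) (a : M) : update s x a y = s y ∧ update s x a z = s z :=
    ⟨update_of_ne hyx a s, update_of_ne hzx a s⟩
  have hφV : IncForm.fv (.all x φ) ⊆ {y, z}ᶜ := fun v hv => by
    rintro (rfl | rfl)
    exacts [hyφ hv.1, hzφ hv.1]
  have hψV : ψ.fv ⊆ {y, z}ᶜ := fun v hv => by
    rintro (rfl | rfl)
    exacts [hyψ hv, hzψ hv]
  change IncForm.tsat _ (extAll _ x) ↔ _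
  rw [tsat_or_and_eqAtom_and_neqAtom, sep_extAll fun s a => by rw [(hupd s a).1, (hupd s a).2],
    sep_extAll fun s a => by rw [(hupd s a).1, (hupd s a).2], IncForm.tsat_extAll_iff hxψ]
  exact and_congr
    ((IncForm.all x φ).tsat_congr_restrictEq hφV (restrictEq_sep_extT_extT hyz Fy Fz _))
    (ψ.tsat_congr_restrictEq hψV (restrictEq_sep_extT_extT hyz Fy Fz _))

/-- soundness of the extended universal-disjunction scope rule:
`∀x φ(x,𝗏) ∨ ψ(𝗏) ≡ ∃y∃z∀x((φ ∧ y=z) ∨ (ψ ∧ y≠z))` for fresh `y, z`,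
over models with at least two elements. -/
theorem all_or_extension (φ ψ : IncForm M) (x y z : ℕ) (X : Team M)
    (htwo : ∃ a b : M, a ≠ b)
    (hxψ : x ∉ IncForm.fv ψ)
    (hyz : y ≠ z) (hyx : y ≠ x) (hzx : z ≠ x)
    (hyφ : y ∉ IncForm.fv φ) (hyψ : y ∉ IncForm.fv ψ)
    (hzφ : z ∉ IncForm.fv φ) (hzψ : z ∉ IncForm.fv ψ) :
    IncForm.tsat (.or (.all x φ) ψ) X ↔
      IncForm.tsat (.ex y (.ex z (.all x
        (.or (.and φ (.fo (eqAtom y z))) (.and ψ (.fo (neqAtom y z))))))) X := by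
  obtain ⟨a, b, hab⟩ := htwo
  rw [tsat_ex_ex_all_or_iff X hxψ hyz hyx hzx hyφ hyψ hzφ hzψ]
  constructor
  · rintro ⟨Y, Z, rfl, hY, hZ⟩
    refine ⟨fun s => {c | s ∈ Y ∧ c = a ∨ s ∈ Z ∧ c = b}, ?_, fun _ => {a},
      fun _ _ => singleton_nonempty a, ?_, ?_⟩
    · rintro s (hs | hs)
      exacts [⟨a, Or.inl ⟨hs, rfl⟩⟩, ⟨b, Or.inr ⟨hs, rfl⟩⟩]
    · convert hY using 1
      ext s
      simp [hab]
    · convert hZ using 1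
      ext s
      aesop
  · rintro ⟨Fy, hFy, Fz, hFz, hY, hZ⟩
    refine ⟨_, _, ?_, hY, hZ⟩
    ext s
    refine ⟨fun hs => ?_, fun hs => hs.elim And.left And.left⟩
    obtain ⟨b, hb⟩ := hFy s hs
    obtain ⟨c, hc⟩ := hFz _ ⟨s, hs, b, hb, rfl⟩
    by_cases hbc : b = c
    exacts [Or.inl ⟨hs, b, hb, c, hc, hbc⟩, Or.inr ⟨hs, b, hb, c, hc, hbc⟩]

end TeamSem
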